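/- With samples bounded in [0,1], the blinkered value of information Λ_i^b of taking N additional samples of a non-leading arm i (i ≠ α) satisfies Λ_i^b ≤ (N(1 − x̄_α^{n_α})/(N + n_i)) · Pr(x̄_i^{n_i+N} ≥ x̄_α^{n_α}) ≤ (N(1 − x̄_α^{n_α})/n_i) · Pr(x̄_i^{n_i+N} ≥ x̄_α^{n_α}). -/

import Mathlib

open MeasureTheory

theorem weighted_mean_sub_le {n N a b s : ℝ} (hn : 0 ≤ n) (hN : 0 ≤ N) (hnN : 0 < n + N)
    (hba : b ≤ a) (hs : s ≤ 1) :
    (n * b + N * s) / (n + N) - a ≤ N * (1 - a) / (N + n) := by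
  rw [add_comm N n, div_sub' hnN.ne', div_le_div_iff_of_pos_right hnN]
  nlinarith [mul_le_mul_of_nonneg_left hba hn, mul_le_mul_of_nonneg_left hs hN]

/-- `s` need not be measurable: `∫⁻` of an indicator is bounded by the outer measure of `s`. -/
theorem integral_le_mul_measureReal_of_le_indicator {α : Type*} [MeasurableSpace α]
    {μ : Measure α} [IsFiniteMeasure μ] {f : α → ℝ} {s : Set α} {c : ℝ} (hc : 0 ≤ c)
    (hf₀ : ∀ x, 0 ≤ f x) (hf : ∀ x, f x ≤ s.indicator (fun _ => c) x) :
    ∫ x, f x ∂μ ≤ c * μ.real s := by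
  by_cases hfi : Integrable f μ
  · rw [integral_eq_lintegral_of_nonneg_ae (.of_forall hf₀) hfi.aestronglyMeasurable,
      measureReal_def, ← ENNReal.toReal_ofReal hc, ← ENNReal.toReal_mul]
    refine ENNReal.toReal_mono (ENNReal.mul_ne_top ENNReal.ofReal_ne_top (measure_ne_top μ s)) ?_
    calc ∫⁻ x, ENNReal.ofReal (f x) ∂μ
        ≤ ∫⁻ x, s.indicator (fun _ => ENNReal.ofReal c) x ∂μ := by
          refine lintegral_mono fun x => (ENNReal.ofReal_le_ofReal (hf x)).trans_eq ?_
          exact (congr_fun (Set.indicator_comp_of_zero ENNReal.ofReal_zero) x).symm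
      _ ≤ ENNReal.ofReal c * μ s := lintegral_indicator_const_le s _
  · rw [integral_undef hfi]
    exact mul_nonneg hc measureReal_nonneg

/-- Here `b = x̄_i^{n_i}`, `a = x̄_α^{n_α}` is the leading sample mean, `S ω ∈ [0,1]` is the mean
of the `N` new samples, and `Y ω = x̄_i^{n_i+N}` is the updated sample mean. -/
theorem blinkered_voi_bound_nonleading_general
    {Ω : Type*} [MeasurableSpace Ω] (ℙ : Measure Ω) [IsProbabilityMeasure ℙ]
    (n N a b : ℝ) (hn : 0 < n) (hN : 0 < N)
    (ha1 : a ≤ 1) (hba : b ≤ a)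
    (S : Ω → ℝ) (hS : ∀ ω, 0 ≤ S ω ∧ S ω ≤ 1)
    (Y : Ω → ℝ) (hY : ∀ ω, Y ω = (n * b + N * S ω) / (n + N)) :
    (∫ ω, max (Y ω - a) 0 ∂ℙ) ≤
      N * (1 - a) / (N + n) * (ℙ {ω | a ≤ Y ω}).toReal ∧
    N * (1 - a) / (N + n) * (ℙ {ω | a ≤ Y ω}).toReal ≤
      N * (1 - a) / n * (ℙ {ω | a ≤ Y ω}).toReal := by
  have hgain : 0 ≤ N * (1 - a) := mul_nonneg hN.le (sub_nonneg.2 ha1)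
  have hc : 0 ≤ N * (1 - a) / (N + n) := div_nonneg hgain (by positivity)
  have hovershoot : ∀ ω, Y ω - a ≤ N * (1 - a) / (N + n) := fun ω => by
    rw [hY ω]
    exact weighted_mean_sub_le hn.le hN.le (by positivity) hba (hS ω).2
  refine ⟨integral_le_mul_measureReal_of_le_indicator hc (fun ω => le_max_right _ _) ?_, ?_⟩
  · intro ω
    by_cases hω : a ≤ Y ω
    · rw [Set.indicator_of_mem (s := {ω | a ≤ Y ω}) hω]
      exact max_le (hovershoot ω) hc
    · rw [Set.indicator_of_notMem (s := {ω | a ≤ Y ω}) hω]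
      exact max_le (by linarith [not_le.1 hω]) le_rfl
  · gcongr
    linarith

/-- blinkered VOI bound for a non-leading arm `i`.  Here `b = x̄_i^{n_i}`,
`a = x̄_α^{n_α}` is the leading sample mean, `S ω ∈ [0,1]` is the mean of the `N` new
samples, and `Y ω = x̄_i^{n_i+N}` is the updated sample mean.  The blinkered VOI
`Λ_i^b = E[max (Y - a) 0]`. -/
theorem blinkered_voi_bound_nonleading
    {Ω : Type*} [MeasurableSpace Ω] (ℙ : Measure Ω) [IsProbabilityMeasure ℙ]
    (n N a b : ℝ) (hn : 0 < n) (hN : 0 < N)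
    (ha1 : a ≤ 1) (hba : b ≤ a)
    (S : Ω → ℝ) (hmeas : Measurable S) (hS : ∀ ω, 0 ≤ S ω ∧ S ω ≤ 1)
    (Y : Ω → ℝ) (hY : ∀ ω, Y ω = (n * b + N * S ω) / (n + N)) :
    (∫ ω, max (Y ω - a) 0 ∂ℙ) ≤
      N * (1 - a) / (N + n) * (ℙ {ω | a ≤ Y ω}).toReal ∧
    N * (1 - a) / (N + n) * (ℙ {ω | a ≤ Y ω}).toReal ≤
      N * (1 - a) / n * (ℙ {ω | a ≤ Y ω}).toReal :=
  blinkered_voi_bound_nonleading_general ℙ n N a b hn hN ha1 hba S hS Y hY
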